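/- Define SZ to be the set of 'strongly zero' permutations: φ ∈ SZ iff every permutation π that contains an interval order-isomorphic to φ has μ(1,π)=0. A permutation φ is called nice if μ(1,φ)=0 and φ has a core, where ψ ∈ cover(φ) is a core of φ if every permutation in the ground of cover(φ)∖{ψ} is contained in ψ (the ground of a set L of permutations is the union of the closures of elements of L with all strongly zero permutations removed). Theorem: every nice permutation is strongly zero; that is, if φ is nice and π contains an interval order-isomorphic to φ, then μ(1,π) = 0. -/
import Mathlib


open scoped Classical

/-- Pattern containment of permutations. -/
def Contains {k n : ℕ} (σ : Equiv.Perm (Fin k)) (π : Equiv.Perm (Fin n)) : Prop :=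
  ∃ f : Fin k ↪o Fin n, ∀ i j : Fin k, σ i < σ j ↔ π (f i) < π (f j)

/-- Strict pattern containment. -/
def StrictContains {k n : ℕ} (σ : Equiv.Perm (Fin k)) (π : Equiv.Perm (Fin n)) : Prop :=
  Contains σ π ∧ ¬ Contains π σ

/-- The Möbius function of the permutation containment poset. -/
noncomputable def mu {k : ℕ} (σ : Equiv.Perm (Fin k)) : (n : ℕ) → Equiv.Perm (Fin n) → ℤ
  | n, π =>
    if Contains σ π then
      if Contains π σ then 1
      else
        - ∑ m ∈ (Finset.range n).attach, ∑ τ : Equiv.Perm (Fin m.1),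
            (if Contains σ τ ∧ Contains τ π then mu σ m.1 τ else 0)
    else 0
termination_by n π => n
decreasing_by exact Finset.mem_range.mp m.2

def pone : Equiv.Perm (Fin 1) := 1
noncomputable def p12 : Equiv.Perm (Fin 2) := 1
noncomputable def p21 : Equiv.Perm (Fin 2) := Equiv.ofBijective ![1, 0] (by decide)
noncomputable def p123 : Equiv.Perm (Fin 3) := 1
noncomputable def p132 : Equiv.Perm (Fin 3) := Equiv.ofBijective ![0, 2, 1] (by decide)
noncomputable def p321 : Equiv.Perm (Fin 3) := Equiv.ofBijective ![2, 1, 0] (by decide)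
noncomputable def p1243 : Equiv.Perm (Fin 4) := Equiv.ofBijective ![0, 1, 3, 2] (by decide)
noncomputable def p2143 : Equiv.Perm (Fin 4) := Equiv.ofBijective ![1, 0, 3, 2] (by decide)
noncomputable def p21354 : Equiv.Perm (Fin 5) := Equiv.ofBijective ![1, 0, 2, 4, 3] (by decide)
noncomputable def p45132 : Equiv.Perm (Fin 5) := Equiv.ofBijective ![3, 4, 0, 2, 1] (by decide)
noncomputable def p25143 : Equiv.Perm (Fin 5) := Equiv.ofBijective ![1, 4, 0, 3, 2] (by decide)
noncomputable def p14532 : Equiv.Perm (Fin 5) := Equiv.ofBijective ![0, 3, 4, 2, 1] (by decide)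
noncomputable def p24513 : Equiv.Perm (Fin 5) := Equiv.ofBijective ![1, 3, 4, 0, 2] (by decide)
noncomputable def p256143 : Equiv.Perm (Fin 6) := Equiv.ofBijective ![1, 4, 5, 0, 3, 2] (by decide)

/-- `π` has an interval (contiguous positions, contiguous values) order-isomorphic to `φ`. -/
def HasIntervalIso {n m : ℕ} (π : Equiv.Perm (Fin n)) (φ : Equiv.Perm (Fin m)) : Prop :=
  ∃ s b : ℕ, s + m ≤ n ∧
    ∀ j : Fin m, ∀ hj : s + j.val < n, ((π ⟨s + j.val, hj⟩) : Fin n).val = b + (φ j).val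

def HasUpAdjacency {n : ℕ} (π : Equiv.Perm (Fin n)) : Prop := HasIntervalIso π p12
def HasDownAdjacency {n : ℕ} (π : Equiv.Perm (Fin n)) : Prop := HasIntervalIso π p21
def OpposingAdjacencies {n : ℕ} (π : Equiv.Perm (Fin n)) : Prop :=
  HasUpAdjacency π ∧ HasDownAdjacency π
def AdjacencyFree {n : ℕ} (π : Equiv.Perm (Fin n)) : Prop :=
  ¬ HasUpAdjacency π ∧ ¬ HasDownAdjacency π

def revP {n : ℕ} (π : Equiv.Perm (Fin n)) : Equiv.Perm (Fin n) := (Fin.revPerm).trans π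
def complP {n : ℕ} (π : Equiv.Perm (Fin n)) : Equiv.Perm (Fin n) := π.trans Fin.revPerm

/-- The eight symmetries of a permutation under the dihedral group of the square. -/
def symmetries {n : ℕ} (π : Equiv.Perm (Fin n)) : Set (Equiv.Perm (Fin n)) :=
  {π, revP π, complP π, revP (complP π), π⁻¹, revP π⁻¹, complP π⁻¹, revP (complP π⁻¹)}

def posMap (c m i : ℕ) : ℕ := if i ≤ c then i else i + m - 1

/-- `π` is the inflation of `σ` at position `c` by `α` (all other points singletons). -/
def IsInflationAt {n m N : ℕ} (σ : Equiv.Perm (Fin n)) (c : Fin n) (α : Equiv.Perm (Fin m))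
    (π : Equiv.Perm (Fin N)) : Prop :=
  N + 1 = n + m ∧
  (∃ b : ℕ, ∀ j : Fin m, ∀ hj : c.val + j.val < N,
      ((π ⟨c.val + j.val, hj⟩) : Fin N).val = b + (α j).val) ∧
  (∀ i i' : Fin n, ∀ hi : posMap c.val m i.val < N, ∀ hi' : posMap c.val m i'.val < N,
    (σ i < σ i' ↔ π ⟨posMap c.val m i.val, hi⟩ < π ⟨posMap c.val m i'.val, hi'⟩))

/-- `π` is the inflation `σ[α 0, …, α (n-1)]`. -/
def IsInflation {n N : ℕ} (σ : Equiv.Perm (Fin n))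
    (α : Fin n → Σ m : ℕ, Equiv.Perm (Fin m)) (π : Equiv.Perm (Fin N)) : Prop :=
  (∀ i, 1 ≤ (α i).1) ∧
  N = ∑ i, (α i).1 ∧
  (∃ b : Fin n → ℕ,
    (∀ i : Fin n, ∀ j : Fin (α i).1,
        ∀ hj : (∑ i' ∈ Finset.univ.filter (fun i' => i' < i), (α i').1) + j.val < N,
      ((π ⟨(∑ i' ∈ Finset.univ.filter (fun i' => i' < i), (α i').1) + j.val, hj⟩) : Fin N).val
        = b i + ((α i).2 j).val) ∧
    (∀ i i' : Fin n, σ i < σ i' ↔ b i < b i'))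

abbrev SigmaPerm := Σ m : ℕ, Equiv.Perm (Fin m)

def SContains (σ τ : SigmaPerm) : Prop := Contains σ.2 τ.2
def SLt (σ τ : SigmaPerm) : Prop := StrictContains σ.2 τ.2

/-- The set of strongly zero permutations. -/
def SZ : Set SigmaPerm :=
  {φ | ∀ (N : ℕ) (π : Equiv.Perm (Fin N)), HasIntervalIso π φ.2 → mu pone N π = 0}

/-- The closure of a permutation: everything it contains. -/
def permClosure (φ : SigmaPerm) : Set SigmaPerm := {τ | SContains τ φ}

/-- The cover of `φ`: permutations covered by `φ`. -/
def permCover (φ : SigmaPerm) : Set SigmaPerm :=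
  {ψ | SLt ψ φ ∧ ¬ ∃ τ : SigmaPerm, SLt ψ τ ∧ SLt τ φ}

/-- The ground of a set of permutations. -/
def permGround (L : Set SigmaPerm) : Set SigmaPerm :=
  (⋃ l ∈ L, permClosure l) \ SZ

def IsCore (ψ φ : SigmaPerm) : Prop :=
  ψ ∈ permCover φ ∧ permGround (permCover φ \ {ψ}) ⊆ permClosure ψ

def Nice (φ : SigmaPerm) : Prop := mu pone φ.1 φ.2 = 0 ∧ ∃ ψ, IsCore ψ φ

/-- A permutation is simple if its only intervals have size 1 or `n`. -/
def IsSimple {n : ℕ} (π : Equiv.Perm (Fin n)) : Prop :=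
  ∀ s m : ℕ, 1 ≤ m → s + m ≤ n →
    (∃ b : ℕ, ∀ j : ℕ, ∀ hj : j < m, ∀ h : s + j < n,
      b ≤ ((π ⟨s + j, h⟩) : Fin n).val ∧ ((π ⟨s + j, h⟩) : Fin n).val < b + m) →
    m = 1 ∨ m = n

/-- The number of simple permutations of length `m`. -/
noncomputable def numSimple (m : ℕ) : ℕ :=
  (Finset.univ.filter (fun π : Equiv.Perm (Fin m) => IsSimple π)).card

/-- The proportion of permutations of length `n` with principal Möbius function zero. -/
noncomputable def Zprop (n : ℕ) : ℝ :=
  ((Finset.univ.filter (fun π : Equiv.Perm (Fin n) => mu pone n π = 0)).card : ℝ) / (n.factorial : ℝ)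

/-- The proportion of permutations of length `n` that are strongly zero. -/
noncomputable def Zsz (n : ℕ) : ℝ :=
  ((Finset.univ.filter (fun π : Equiv.Perm (Fin n) => (⟨n, π⟩ : SigmaPerm) ∈ SZ)).card : ℝ) / (n.factorial : ℝ)


set_option maxHeartbeats 1600000
section AuxNICE
lemma embF_contains {k n : ℕ} {σ : Equiv.Perm (Fin k)} {π : Equiv.Perm (Fin n)}
    (f : Fin k → Fin n) (hf : StrictMono f) (h : ∀ i j, σ i < σ j ↔ π (f i) < π (f j)) :
    Contains σ π := ⟨OrderEmbedding.ofStrictMono f hf, h⟩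

lemma contains_refl {n : ℕ} (π : Equiv.Perm (Fin n)) : Contains π π :=
  embF_contains id strictMono_id (fun _ _ => Iff.rfl)

lemma contains_trans {k m n : ℕ} {σ : Equiv.Perm (Fin k)} {τ : Equiv.Perm (Fin m)}
    {π : Equiv.Perm (Fin n)} (h1 : Contains σ τ) (h2 : Contains τ π) : Contains σ π := by
  obtain ⟨f, hf⟩ := h1; obtain ⟨g, hg⟩ := h2
  exact ⟨f.trans g, fun i j => (hf i j).trans (hg (f i) (f j))⟩

lemma strictMono_le_apply {k n : ℕ} {f : Fin k → Fin n} (hf : StrictMono f) (i : Fin k) :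
    i.val ≤ (f i).val := by
  obtain ⟨v, hv⟩ := i
  induction v with
  | zero => exact Nat.zero_le _
  | succ m ih =>
    have h1 : (⟨m, by omega⟩ : Fin k) < ⟨m+1, hv⟩ := by simp [Fin.lt_def]
    have := hf h1
    have h2 := ih (by omega)
    rw [Fin.lt_def] at this
    simp only [Fin.val_mk] at this h2 ⊢
    omega

lemma contains_length_le {k n : ℕ} {σ : Equiv.Perm (Fin k)} {π : Equiv.Perm (Fin n)}
    (h : Contains σ π) : k ≤ n := by
  obtain ⟨f, -⟩ := h
  rcases Nat.eq_zero_or_pos k with hk | hk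
  · omega
  · have h1 := strictMono_le_apply f.strictMono ⟨k-1, by omega⟩
    have h2 := (f ⟨k-1, by omega⟩).isLt
    simp only [Fin.val_mk] at h1
    omega

lemma strictMono_fin_eq_id {n : ℕ} {f : Fin n → Fin n} (hf : StrictMono f) (i : Fin n) :
    f i = i := by
  have hb : Function.Bijective f := Finite.injective_iff_bijective.mp hf.injective
  set e := Equiv.ofBijective f hb with he
  have hfe : ∀ j, f j = e j := fun _ => rfl
  have hsymm : StrictMono e.symm := by
    intro a b hab
    rcases lt_trichotomy (e.symm a) (e.symm b) with h | h | h
    · exact h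
    · exact absurd hab (by rw [← e.apply_symm_apply a, ← e.apply_symm_apply b, h]; exact lt_irrefl _)
    · have := hf h
      rw [hfe, hfe, e.apply_symm_apply, e.apply_symm_apply] at this
      exact absurd (hab.trans this) (lt_irrefl _)
  have h1 : i.val ≤ (f i).val := strictMono_le_apply hf i
  have h2 : (f i).val ≤ i.val := by
    have h3 := strictMono_le_apply hsymm (f i)
    have h4 : e.symm (f i) = i := by rw [hfe]; exact e.symm_apply_apply i
    rw [h4] at h3; exact h3
  exact Fin.ext (le_antisymm h2 h1)

lemma eq_of_contains_same {n : ℕ} {σ π : Equiv.Perm (Fin n)} (h : Contains σ π) : σ = π := by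
  obtain ⟨f, hf⟩ := h
  have hid : ∀ i, f i = i := strictMono_fin_eq_id f.strictMono
  have hmono : StrictMono (fun x => π (σ.symm x)) := by
    intro a b hab
    have := (hf (σ.symm a) (σ.symm b)).mp (by simpa using hab)
    simpa [hid] using this
  ext i
  have := strictMono_fin_eq_id hmono (σ i)
  simp only [Equiv.symm_apply_apply] at this
  rw [this]

lemma fin1_not_lt (i j : Fin 1) : ¬ i < j := by
  rw [Subsingleton.elim i j]; exact lt_irrefl j

lemma contains_pone {n : ℕ} (hn : 1 ≤ n) (π : Equiv.Perm (Fin n)) : Contains pone π := by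
  refine embF_contains (fun _ => ⟨0, hn⟩) (fun i j hij => absurd hij (fin1_not_lt i j)) ?_
  intro i j
  simp only [Subsingleton.elim i j]
  exact ⟨fun h => absurd h (fin1_not_lt _ _), fun h => absurd h (lt_irrefl _)⟩

lemma not_contains_of_lt {k n : ℕ} {σ : Equiv.Perm (Fin k)} {π : Equiv.Perm (Fin n)}
    (h : n < k) : ¬ Contains σ π := fun hc => absurd (contains_length_le hc) (by omega)

lemma mu_rec {n : ℕ} (π : Equiv.Perm (Fin n)) (hn : 2 ≤ n) :
    mu pone n π = - ∑ m ∈ Finset.range n, ∑ τ : Equiv.Perm (Fin m),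
            (if Contains pone τ ∧ Contains τ π then mu pone m τ else 0) := by
  rw [mu, if_pos (contains_pone (by omega) π), if_neg (not_contains_of_lt (by omega))]
  rw [← Finset.sum_attach (Finset.range n) (fun m => ∑ τ : Equiv.Perm (Fin m),
            (if Contains pone τ ∧ Contains τ π then mu pone m τ else 0))]

-- downward closed sets
lemma downclosed_iff {k : ℕ} (D : Finset (Fin k))
    (h : ∀ i ∈ D, ∀ j : Fin k, j < i → j ∈ D) (i : Fin k) : i ∈ D ↔ i.val < D.card := by
  constructor
  · intro hi
    have hsub : Finset.Iic i ⊆ D := by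
      intro x hx
      rw [Finset.mem_Iic] at hx
      rcases eq_or_lt_of_le hx with h' | h'
      · rwa [h']
      · exact h i hi x h'
    have := Finset.card_le_card hsub
    rwa [Fin.card_Iic] at this
  · intro hi
    by_contra hni
    have hsub : D ⊆ Finset.Iio i := by
      intro x hx
      rw [Finset.mem_Iio]
      rcases lt_trichotomy x i with h' | h' | h'
      · exact h'
      · exact absurd (h' ▸ hx) hni
      · exact absurd (h x hx i h') hni
    have := Finset.card_le_card hsub
    rw [Fin.card_Iio] at this
    omega

section Block
variable {N n : ℕ} (π : Equiv.Perm (Fin N)) (φ : Equiv.Perm (Fin n)) (s b : ℕ)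
  (hsn : s + n ≤ N) (hbn : b + n ≤ N)
  (hblock : ∀ (j : Fin n) (hj : s + j.val < N), (π ⟨s + j.val, hj⟩).val = b + (φ j).val)

include hsn hblock in
lemma block_val : ∀ p : Fin N, s ≤ p.val → p.val < s + n → b ≤ (π p).val ∧ (π p).val < b + n := by
  intro p hp1 hp2
  have hj : p.val - s < n := by omega
  have hpe : p = ⟨s + (⟨p.val - s, hj⟩ : Fin n).val, by simp; omega⟩ := by
    apply Fin.ext; simp; omega
  rw [hpe, hblock]
  have := (φ ⟨p.val - s, hj⟩).isLt
  omega

include hsn hbn hblock in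
lemma block_pos : ∀ p : Fin N, b ≤ (π p).val → (π p).val < b + n → s ≤ p.val ∧ p.val < s + n := by
  intro p hp1 hp2
  have hv : (π p).val - b < n := by omega
  set j : Fin n := φ.symm ⟨(π p).val - b, hv⟩ with hjdef
  have hq : s + j.val < N := by have := j.isLt; omega
  have h1 := hblock j hq
  have h2 : (φ j).val = (π p).val - b := by rw [hjdef, Equiv.apply_symm_apply]
  have heq : π ⟨s + j.val, hq⟩ = π p := Fin.ext (by rw [h1, h2]; omega)
  have hpeq := π.injective heq
  have hj2 := j.isLt
  have hp : (⟨s + j.val, hq⟩ : Fin N).val = p.val := congrArg Fin.val hpeq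
  simp only [Fin.val_mk] at hp
  omega

include hsn hbn hblock in
lemma extract {k : ℕ} (τ : Equiv.Perm (Fin k)) (f : Fin k → Fin N) (hf : StrictMono f)
    (hof : ∀ i j, τ i < τ j ↔ π (f i) < π (f j)) :
    ∃ (m a c : ℕ) (σ : Equiv.Perm (Fin m)) (g : Fin m → Fin n),
      a + m ≤ k ∧ m ≤ n ∧
      (∀ i : Fin k, i.val < a ↔ (f i).val < s) ∧
      (∀ i : Fin k, (s ≤ (f i).val ∧ (f i).val < s + n) ↔ (a ≤ i.val ∧ i.val < a + m)) ∧
      (∀ (j : Fin m) (hj : a + j.val < k), (τ ⟨a + j.val, hj⟩).val = c + (σ j).val) ∧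
      StrictMono g ∧
      (∀ i j : Fin m, σ i < σ j ↔ φ (g i) < φ (g j)) ∧
      (∀ (j : Fin m) (hj : a + j.val < k), (f ⟨a + j.val, hj⟩).val = s + (g j).val) := by
  classical
  set A : Finset (Fin k) := Finset.univ.filter (fun i => (f i).val < s) with hA
  set AI : Finset (Fin k) := Finset.univ.filter (fun i => (f i).val < s + n) with hAI
  set I : Finset (Fin k) := Finset.univ.filter (fun i => s ≤ (f i).val ∧ (f i).val < s + n) with hI
  have hAdc : ∀ i ∈ A, ∀ j : Fin k, j < i → j ∈ A := by
    intro i hi j hji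
    simp only [hA, Finset.mem_filter, Finset.mem_univ, true_and] at hi ⊢
    exact lt_of_lt_of_le (Fin.lt_def.mp (hf hji)) (le_of_lt hi)
  have hAIdc : ∀ i ∈ AI, ∀ j : Fin k, j < i → j ∈ AI := by
    intro i hi j hji
    simp only [hAI, Finset.mem_filter, Finset.mem_univ, true_and] at hi ⊢
    exact lt_of_lt_of_le (Fin.lt_def.mp (hf hji)) (le_of_lt hi)
  set a := A.card with ha
  have hsubAI : A ⊆ AI := by
    intro x hx
    simp only [hA, hAI, Finset.mem_filter, Finset.mem_univ, true_and] at hx ⊢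
    omega
  have hIeq : I = AI \ A := by
    ext x
    simp only [hI, hAI, hA, Finset.mem_filter, Finset.mem_sdiff, Finset.mem_univ, true_and]
    omega
  set m := I.card with hm
  have hAIcard : AI.card = a + m := by
    rw [hm, hIeq, Finset.card_sdiff_of_subset hsubAI]
    have := Finset.card_le_card hsubAI
    omega
  have hmemA : ∀ i : Fin k, i ∈ A ↔ i.val < a := fun i => downclosed_iff A hAdc i
  have hmemAI : ∀ i : Fin k, i ∈ AI ↔ i.val < a + m := by
    intro i; rw [downclosed_iff AI hAIdc i, hAIcard]
  have hAchar : ∀ i : Fin k, i.val < a ↔ (f i).val < s := by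
    intro i
    rw [← hmemA i]
    simp [hA]
  have hchar : ∀ i : Fin k, (s ≤ (f i).val ∧ (f i).val < s + n) ↔ (a ≤ i.val ∧ i.val < a + m) := by
    intro i
    have h1 := hmemA i
    have h2 := hmemAI i
    simp only [hA, hAI, Finset.mem_filter, Finset.mem_univ, true_and] at h1 h2
    omega
  have ham : a + m ≤ k := by
    rw [← hAIcard]
    have := Finset.card_le_card (Finset.subset_univ AI)
    simpa using this
  have hmn : m ≤ n := by
    rcases Nat.eq_zero_or_pos n with hn0 | hn0
    · have : I = ∅ := by
        rw [Finset.eq_empty_iff_forall_notMem]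
        intro x hx
        simp only [hI, Finset.mem_filter, Finset.mem_univ, true_and] at hx
        omega
      rw [hm, this]; simp
    · have : I.card ≤ (Finset.univ : Finset (Fin n)).card := by
        apply Finset.card_le_card_of_injOn
          (fun i => if h : s ≤ (f i).val ∧ (f i).val < s + n then
            (⟨(f i).val - s, by omega⟩ : Fin n) else ⟨0, hn0⟩)
        · intro x _; exact Finset.mem_univ _
        · intro x hx y hy hxy
          rw [Finset.mem_coe, hI, Finset.mem_filter] at hx hy
          replace hx := hx.2
          replace hy := hy.2
          simp only at hxy
          rw [dif_pos hx, dif_pos hy] at hxy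
          simp only [Fin.mk.injEq] at hxy
          exact hf.injective (Fin.ext (by omega))
      rw [hm]; simpa using this
  -- value side
  set F : Fin k → Fin N := fun v => π (f (τ.symm v)) with hF
  have hFmono : StrictMono F := by
    intro v w hvw
    rw [hF]
    have h1 : τ (τ.symm v) < τ (τ.symm w) := by
      rw [Equiv.apply_symm_apply, Equiv.apply_symm_apply]; exact hvw
    exact (hof _ _).mp h1
  set Dv : Finset (Fin k) := Finset.univ.filter (fun v => (F v).val < b) with hDv
  set DVI : Finset (Fin k) := Finset.univ.filter (fun v => (F v).val < b + n) with hDVI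
  set V : Finset (Fin k) := Finset.univ.filter (fun v => b ≤ (F v).val ∧ (F v).val < b + n) with hV
  have hDvdc : ∀ i ∈ Dv, ∀ j : Fin k, j < i → j ∈ Dv := by
    intro i hi j hji
    simp only [hDv, Finset.mem_filter, Finset.mem_univ, true_and] at hi ⊢
    exact lt_of_lt_of_le (Fin.lt_def.mp (hFmono hji)) (le_of_lt hi)
  have hDVIdc : ∀ i ∈ DVI, ∀ j : Fin k, j < i → j ∈ DVI := by
    intro i hi j hji
    simp only [hDVI, Finset.mem_filter, Finset.mem_univ, true_and] at hi ⊢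
    exact lt_of_lt_of_le (Fin.lt_def.mp (hFmono hji)) (le_of_lt hi)
  set c := Dv.card with hc
  have hsubV : Dv ⊆ DVI := by
    intro x hx
    simp only [hDv, hDVI, Finset.mem_filter, Finset.mem_univ, true_and] at hx ⊢
    omega
  have hVeq : V = DVI \ Dv := by
    ext x
    simp only [hV, hDVI, hDv, Finset.mem_filter, Finset.mem_sdiff, Finset.mem_univ, true_and]
    omega
  -- V = image of I under τ
  have hVI : V = I.image τ := by
    ext v
    simp only [hV, hI, Finset.mem_filter, Finset.mem_univ, true_and, Finset.mem_image]
    constructor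
    · intro hv
      refine ⟨τ.symm v, ?_, Equiv.apply_symm_apply _ _⟩
      exact block_pos π φ s b hsn hbn hblock (f (τ.symm v)) hv.1 hv.2
    · rintro ⟨i, hi, rfl⟩
      have : τ.symm (τ i) = i := Equiv.symm_apply_apply _ _
      rw [hF]
      simp only [this]
      exact block_val π φ s b hsn hblock (f i) hi.1 hi.2
  have hVcard : V.card = m := by
    rw [hVI, Finset.card_image_of_injective _ τ.injective, hm]
  have hDVIcard : DVI.card = c + m := by
    rw [← hVcard, hVeq, Finset.card_sdiff_of_subset hsubV]
    have := Finset.card_le_card hsubV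
    omega
  have hmemDv : ∀ v : Fin k, v ∈ Dv ↔ v.val < c := fun v => downclosed_iff Dv hDvdc v
  have hmemDVI : ∀ v : Fin k, v ∈ DVI ↔ v.val < c + m := by
    intro v; rw [downclosed_iff DVI hDVIdc v, hDVIcard]
  have hvchar : ∀ v : Fin k, (b ≤ (F v).val ∧ (F v).val < b + n) ↔ (c ≤ v.val ∧ v.val < c + m) := by
    intro v
    have h1 := hmemDv v
    have h2 := hmemDVI v
    simp only [hDv, hDVI, Finset.mem_filter, Finset.mem_univ, true_and] at h1 h2
    omega
  -- values of τ at inside positions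
  have hτval : ∀ (j : ℕ) (hj : j < m) (hjk : a + j < k),
      c ≤ (τ ⟨a + j, hjk⟩).val ∧ (τ ⟨a + j, hjk⟩).val < c + m := by
    intro j hj hjk
    have hin : s ≤ (f ⟨a + j, hjk⟩).val ∧ (f ⟨a + j, hjk⟩).val < s + n :=
      (hchar ⟨a + j, hjk⟩).mpr (by simp; omega)
    have hbv := block_val π φ s b hsn hblock _ hin.1 hin.2
    have hFv : F (τ ⟨a + j, hjk⟩) = π (f ⟨a + j, hjk⟩) := by
      rw [hF]; simp [Equiv.symm_apply_apply]
    rw [← hvchar]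
    rw [hFv]
    exact hbv
  clear hvchar hmemDv hmemDVI hDVIcard hVcard hVI hVeq hsubV hDVIdc hDvdc hmemA hmemAI hAIcard hIeq hsubAI hAIdc hAdc
  clear_value a m c
  clear hV hDVI hDv hF hFmono V DVI Dv F hI hAI hA I AI A hc hm ha
  -- define σ
  obtain ⟨σ, hσval⟩ : ∃ σ : Equiv.Perm (Fin m),
      ∀ (j : Fin m) (hj : a + j.val < k), (σ j).val = (τ ⟨a + j.val, hj⟩).val - c := by
    have hσinj : Function.Injective (fun j : Fin m =>
        (⟨(τ ⟨a + j.val, by omega⟩).val - c, by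
            have := hτval j.val j.isLt (by omega); omega⟩ : Fin m)) := by
      intro x y hxy
      simp only [Fin.mk.injEq] at hxy
      have h1 := hτval x.val x.isLt (by omega)
      have h2 := hτval y.val y.isLt (by omega)
      have h3 : τ ⟨a + x.val, by omega⟩ = τ ⟨a + y.val, by omega⟩ := Fin.ext (by omega)
      have h4 := τ.injective h3
      simp only [Fin.mk.injEq] at h4
      exact Fin.ext (by omega)
    exact ⟨Equiv.ofBijective _ (Finite.injective_iff_bijective.mp hσinj), fun j hj => rfl⟩
  -- define g
  have hgmem : ∀ j : Fin m, ∀ hj : a + j.val < k,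
      s ≤ (f ⟨a + j.val, hj⟩).val ∧ (f ⟨a + j.val, hj⟩).val < s + n := by
    intro j hj
    refine (hchar _).mpr ?_
    simp only [Fin.val_mk]
    omega
  obtain ⟨g, hgval⟩ : ∃ g : Fin m → Fin n,
      ∀ (j : Fin m) (hj : a + j.val < k), (g j).val = (f ⟨a + j.val, hj⟩).val - s :=
    ⟨fun j => ⟨(f ⟨a + j.val, by omega⟩).val - s, by
        have := hgmem j (by omega); omega⟩, fun j hj => rfl⟩
  have hgmono : StrictMono g := by
    intro x y hxy
    have h1 := hgmem x (by omega)
    have h2 := hgmem y (by omega)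
    have h3 : f ⟨a + x.val, by omega⟩ < f ⟨a + y.val, by omega⟩ :=
      hf (by rw [Fin.lt_def]; simp only [Fin.val_mk]; omega)
    rw [Fin.lt_def] at h3 ⊢
    rw [hgval x (by omega), hgval y (by omega)]
    omega
  have hπg : ∀ (j : Fin m) (hj : a + j.val < k),
      (π (f ⟨a + j.val, hj⟩)).val = b + (φ (g j)).val := by
    intro j hj
    have h1 := hgmem j hj
    have hgj := hgval j hj
    have hfe : f ⟨a + j.val, hj⟩ = ⟨s + (g j).val, by have := (g j).isLt; omega⟩ :=
      Fin.ext (by simp only [Fin.val_mk]; omega)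
    rw [hfe, hblock]
  refine ⟨m, a, c, σ, g, ham, hmn, hAchar, hchar, ?_, hgmono, ?_, ?_⟩
  · intro j hj
    rw [hσval j hj]
    have := hτval j.val j.isLt hj
    omega
  · intro x y
    have hxk : a + x.val < k := by omega
    have hyk : a + y.val < k := by omega
    have e1 := hσval x hxk
    have e2 := hσval y hyk
    have e3 := hπg x hxk
    have e4 := hπg y hyk
    have h5 := hof ⟨a + x.val, hxk⟩ ⟨a + y.val, hyk⟩
    rw [Fin.lt_def, Fin.lt_def] at h5
    have hx := hτval x.val x.isLt hxk
    have hy := hτval y.val y.isLt hyk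
    rw [Fin.lt_def, Fin.lt_def]
    omega
  · intro j hj
    have h1 := hgmem j hj
    rw [hgval j hj]
    omega
end Block

def squish (b d v : ℕ) : ℕ := if v < b then v else v - d

lemma squish_mono_iff {b n r v w : ℕ} (hrn : r ≤ n)
    (hv : v < b ∨ b + n ≤ v) (hw : w < b ∨ b + n ≤ w) :
    squish b (n-r) v < squish b (n-r) w ↔ v < w := by
  unfold squish; split_ifs <;> omega

lemma squish_lt_block {b n r v t : ℕ} (hrn : r ≤ n) (ht : t < r)
    (hv : v < b ∨ b + n ≤ v) : squish b (n-r) v < b + t ↔ v < b := by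
  unfold squish; split_ifs <;> omega

lemma block_lt_squish {b n r v t : ℕ} (hrn : r ≤ n) (ht : t < r)
    (hv : v < b ∨ b + n ≤ v) : b + t < squish b (n-r) v ↔ b + n ≤ v := by
  unfold squish; split_ifs <;> omega

section Glue
variable {N n : ℕ} (π : Equiv.Perm (Fin N)) (φ : Equiv.Perm (Fin n)) (s b : ℕ)
  (hsn : s + n ≤ N) (hbn : b + n ≤ N)
  (hblock : ∀ (j : Fin n) (hj : s + j.val < N), (π ⟨s + j.val, hj⟩).val = b + (φ j).val)

include hsn hbn hblock in
lemma glue {r : ℕ} (ψ : Equiv.Perm (Fin r)) (hr1 : 1 ≤ r) (hrn : r ≤ n)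
    (hg : Fin r → Fin n) (hgmono : StrictMono hg)
    (hgord : ∀ i j, ψ i < ψ j ↔ φ (hg i) < φ (hg j)) :
    ∃ ρ : Equiv.Perm (Fin (N - (n - r))),
      Contains ρ π ∧
      (∀ (k : ℕ) (τ : Equiv.Perm (Fin k)) (f : Fin k → Fin N), StrictMono f →
        (∀ i j, τ i < τ j ↔ π (f i) < π (f j)) →
        ∀ (m a c : ℕ) (σ : Equiv.Perm (Fin m)) (e : Fin m → Fin r),
          a + m ≤ k →
          (∀ i : Fin k, i.val < a ↔ (f i).val < s) →
          (∀ i : Fin k, (s ≤ (f i).val ∧ (f i).val < s + n) ↔ (a ≤ i.val ∧ i.val < a + m)) →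
          (∀ (j : Fin m) (hj : a + j.val < k), (τ ⟨a + j.val, hj⟩).val = c + (σ j).val) →
          StrictMono e →
          (∀ i j : Fin m, σ i < σ j ↔ ψ (e i) < ψ (e j)) →
          Contains τ ρ) := by
  set M := N - (n - r) with hMdef
  have hM : M + (n - r) = N := by omega
  have hsrM : s + r ≤ M := by omega
  have hbrM : b + r ≤ M := by omega
  -- a general fact: positions outside the block have values outside the value block
  have hout : ∀ p : Fin N, p.val < s ∨ s + n ≤ p.val → (π p).val < b ∨ b + n ≤ (π p).val := by
    intro p hp
    by_contra hcon
    push_neg at hcon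
    have := block_pos π φ s b hsn hbn hblock p (by omega) (by omega)
    omega
  -- position map P
  obtain ⟨P, hP1, hP2, hP3⟩ : ∃ P : Fin M → Fin N,
      (∀ (i : Fin M), i.val < s → (P i).val = i.val) ∧
      (∀ (i : Fin M), s ≤ i.val → ∀ (h2 : i.val < s + r),
        (P i).val = s + (hg ⟨i.val - s, by omega⟩).val) ∧
      (∀ (i : Fin M), s + r ≤ i.val → (P i).val = i.val + (n - r)) := by
    refine ⟨fun i => if h1 : i.val < s then ⟨i.val, by omega⟩
      else if h2 : i.val < s + r then ⟨s + (hg ⟨i.val - s, by omega⟩).val,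
        by have := (hg ⟨i.val - s, by omega⟩).isLt; omega⟩
      else ⟨i.val + (n - r), by omega⟩, ?_, ?_, ?_⟩
    · intro i h1; beta_reduce; rw [dif_pos h1]
    · intro i h1 h2; beta_reduce; rw [dif_neg (by omega), dif_pos h2]
    · intro i h3; beta_reduce; rw [dif_neg (by omega), dif_neg (by omega)]
  have hPmono : StrictMono P := by
    intro i j hij
    rw [Fin.lt_def] at hij ⊢
    rcases Nat.lt_or_ge i.val s with hi1 | hi1
    · rw [hP1 i hi1]
      rcases Nat.lt_or_ge j.val s with hj1 | hj1
      · rw [hP1 j hj1]; omega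
      · rcases Nat.lt_or_ge j.val (s + r) with hj2 | hj2
        · rw [hP2 j hj1 hj2]; omega
        · rw [hP3 j hj2]; omega
    · rcases Nat.lt_or_ge i.val (s + r) with hi2 | hi2
      · rw [hP2 i hi1 hi2]
        rcases Nat.lt_or_ge j.val s with hj1 | hj1
        · omega
        · rcases Nat.lt_or_ge j.val (s + r) with hj2 | hj2
          · rw [hP2 j hj1 hj2]
            have := hgmono (show (⟨i.val - s, by omega⟩ : Fin r) < ⟨j.val - s, by omega⟩ by
              rw [Fin.lt_def]; simp only [Fin.val_mk]; omega)
            rw [Fin.lt_def] at this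
            omega
          · rw [hP3 j hj2]
            have := (hg ⟨i.val - s, by omega⟩).isLt
            omega
      · rw [hP3 i hi2]
        rcases Nat.lt_or_ge j.val s with hj1 | hj1
        · omega
        · rcases Nat.lt_or_ge j.val (s + r) with hj2 | hj2
          · omega
          · rw [hP3 j hj2]; omega
  -- the deflated permutation as a function
  obtain ⟨R, hR1, hR2, hR3⟩ : ∃ R : Fin M → Fin M,
      (∀ (i : Fin M) (h1 : i.val < s), (R i).val = squish b (n-r) (π ⟨i.val, by omega⟩).val) ∧
      (∀ (i : Fin M), s ≤ i.val → ∀ (h2 : i.val < s + r),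
        (R i).val = b + (ψ ⟨i.val - s, by omega⟩).val) ∧
      (∀ (i : Fin M) (h3 : s + r ≤ i.val), (R i).val = squish b (n-r) (π ⟨i.val + (n - r), by omega⟩).val) := by
    have hsq : ∀ v : Fin N, squish b (n-r) v.val < M := by
      intro v
      unfold squish
      have := v.isLt
      split_ifs <;> omega
    refine ⟨fun i => if h1 : i.val < s then ⟨squish b (n-r) (π ⟨i.val, by omega⟩).val, hsq _⟩
      else if h2 : i.val < s + r then ⟨b + (ψ ⟨i.val - s, by omega⟩).val,
        by have := (ψ ⟨i.val - s, by omega⟩).isLt; omega⟩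
      else ⟨squish b (n-r) (π ⟨i.val + (n - r), by omega⟩).val, hsq _⟩, ?_, ?_, ?_⟩
    · intro i h1; beta_reduce; rw [dif_pos h1]
    · intro i h1 h2; beta_reduce; rw [dif_neg (by omega), dif_pos h2]
    · intro i h3; beta_reduce; rw [dif_neg (by omega), dif_neg (by omega)]
  -- key comparison: R reflects π ∘ P
  have keyR : ∀ i j : Fin M, ((R i).val < (R j).val ↔ (π (P i)).val < (π (P j)).val) := by
    have hcompute : ∀ i : Fin M,
        (i.val < s → (R i).val = squish b (n-r) (π (P i)).val ∧
          ((π (P i)).val < b ∨ b + n ≤ (π (P i)).val)) ∧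
        (s ≤ i.val → ∀ (h2 : i.val < s + r),
          (R i).val = b + (ψ ⟨i.val - s, by omega⟩).val ∧
          (π (P i)).val = b + (φ (hg ⟨i.val - s, by omega⟩)).val) ∧
        (s + r ≤ i.val → (R i).val = squish b (n-r) (π (P i)).val ∧
          ((π (P i)).val < b ∨ b + n ≤ (π (P i)).val)) := by
      intro i
      refine ⟨?_, ?_, ?_⟩
      · intro h1
        have hPi : P i = ⟨i.val, by omega⟩ := Fin.ext (by rw [hP1 i h1])
        rw [hPi]
        refine ⟨(hR1 i h1).trans rfl, hout _ (by simp only [Fin.val_mk]; omega)⟩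
      · intro h1 h2
        have hPi : P i = ⟨s + (hg ⟨i.val - s, by omega⟩).val, by
            have := (hg ⟨i.val - s, by omega⟩).isLt; omega⟩ := Fin.ext (by rw [hP2 i h1 h2])
        rw [hPi]
        exact ⟨(hR2 i h1 h2), hblock _ _⟩
      · intro h3
        have hPi : P i = ⟨i.val + (n - r), by omega⟩ := Fin.ext (by rw [hP3 i h3])
        rw [hPi]
        refine ⟨(hR3 i h3).trans rfl, hout _ (by simp only [Fin.val_mk]; omega)⟩
    intro i j
    rcases Nat.lt_or_ge i.val s with hi1 | hi1
    · obtain ⟨hRi, houti⟩ := (hcompute i).1 hi1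
      rcases Nat.lt_or_ge j.val s with hj1 | hj1
      · obtain ⟨hRj, houtj⟩ := (hcompute j).1 hj1
        rw [hRi, hRj]; exact squish_mono_iff hrn houti houtj
      · rcases Nat.lt_or_ge j.val (s + r) with hj2 | hj2
        · obtain ⟨hRj, hvalj⟩ := (hcompute j).2.1 hj1 hj2
          rw [hRi, hRj, hvalj]
          have h5 := (ψ ⟨j.val - s, by omega⟩).isLt
          have h6 := (φ (hg ⟨j.val - s, by omega⟩)).isLt
          rw [squish_lt_block hrn h5 houti]
          omega
        · obtain ⟨hRj, houtj⟩ := (hcompute j).2.2 hj2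
          rw [hRi, hRj]; exact squish_mono_iff hrn houti houtj
    · rcases Nat.lt_or_ge i.val (s + r) with hi2 | hi2
      · obtain ⟨hRi, hvali⟩ := (hcompute i).2.1 hi1 hi2
        rcases Nat.lt_or_ge j.val s with hj1 | hj1
        · obtain ⟨hRj, houtj⟩ := (hcompute j).1 hj1
          rw [hRi, hRj, hvali]
          have h5 := (ψ ⟨i.val - s, by omega⟩).isLt
          have h6 := (φ (hg ⟨i.val - s, by omega⟩)).isLt
          rw [block_lt_squish hrn h5 houtj]
          omega
        · rcases Nat.lt_or_ge j.val (s + r) with hj2 | hj2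
          · obtain ⟨hRj, hvalj⟩ := (hcompute j).2.1 hj1 hj2
            rw [hRi, hRj, hvali, hvalj]
            have := hgord ⟨i.val - s, by omega⟩ ⟨j.val - s, by omega⟩
            rw [Fin.lt_def, Fin.lt_def] at this
            omega
          · obtain ⟨hRj, houtj⟩ := (hcompute j).2.2 hj2
            rw [hRi, hRj, hvali]
            have h5 := (ψ ⟨i.val - s, by omega⟩).isLt
            have h6 := (φ (hg ⟨i.val - s, by omega⟩)).isLt
            rw [block_lt_squish hrn h5 houtj]
            omega
      · obtain ⟨hRi, houti⟩ := (hcompute i).2.2 hi2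
        rcases Nat.lt_or_ge j.val s with hj1 | hj1
        · obtain ⟨hRj, houtj⟩ := (hcompute j).1 hj1
          rw [hRi, hRj]; exact squish_mono_iff hrn houti houtj
        · rcases Nat.lt_or_ge j.val (s + r) with hj2 | hj2
          · obtain ⟨hRj, hvalj⟩ := (hcompute j).2.1 hj1 hj2
            rw [hRi, hRj, hvalj]
            have h5 := (ψ ⟨j.val - s, by omega⟩).isLt
            have h6 := (φ (hg ⟨j.val - s, by omega⟩)).isLt
            rw [squish_lt_block hrn h5 houti]
            omega
          · obtain ⟨hRj, houtj⟩ := (hcompute j).2.2 hj2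
            rw [hRi, hRj]; exact squish_mono_iff hrn houti houtj
  have hRinj : Function.Injective R := by
    intro i j hij
    have h1 : ¬ (R i).val < (R j).val := by rw [hij]; omega
    have h2 : ¬ (R j).val < (R i).val := by rw [hij]; omega
    rw [keyR] at h1
    rw [keyR] at h2
    have : π (P i) = π (P j) := Fin.ext (by omega)
    exact hPmono.injective (π.injective this)
  set ρ : Equiv.Perm (Fin M) := Equiv.ofBijective R (Finite.injective_iff_bijective.mp hRinj)
    with hρdef
  have hρval : ∀ i, (ρ i : Fin M) = R i := fun _ => rfl
  have hρπ : Contains ρ π := by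
    apply embF_contains P hPmono
    intro i j
    rw [Fin.lt_def, Fin.lt_def, hρval, hρval]
    exact keyR i j
  refine ⟨ρ, hρπ, ?_⟩
  -- gluing
  intro k τ f hf hof m a c σ e ham hAchar hchar hiso hemono heord
  have hfa : ∀ i : Fin k, i.val < a → (f i).val < s := fun i h => (hAchar i).mp h
  have hfb : ∀ i : Fin k, a + m ≤ i.val → s + n ≤ (f i).val := by
    intro i h
    have h1 := (hAchar i).mpr
    have h2 := (hchar i).mpr
    by_contra hcon
    push_neg at hcon
    rcases Nat.lt_or_ge (f i).val s with h3 | h3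
    · have := (hAchar i).mpr h3; omega
    · have := (hchar i).mp ⟨h3, by omega⟩; omega
  have hfm : ∀ (j : Fin m) (hj : a + j.val < k),
      s ≤ (f ⟨a + j.val, hj⟩).val ∧ (f ⟨a + j.val, hj⟩).val < s + n := by
    intro j hj
    exact (hchar _).mpr (by simp only [Fin.val_mk]; omega)
  obtain ⟨G, hG1, hG2, hG3⟩ : ∃ G : Fin k → Fin M,
      (∀ (i : Fin k), i.val < a → (G i).val = (f i).val) ∧
      (∀ (i : Fin k) (_ : a ≤ i.val) (h2 : i.val < a + m),
        (G i).val = s + (e ⟨i.val - a, by omega⟩).val) ∧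
      (∀ (i : Fin k), a + m ≤ i.val → (G i).val = (f i).val - (n - r)) := by
    refine ⟨fun i => if h1 : i.val < a then ⟨(f i).val, by have := hfa i h1; omega⟩
      else if h2 : i.val < a + m then ⟨s + (e ⟨i.val - a, by omega⟩).val,
        by have := (e ⟨i.val - a, by omega⟩).isLt; omega⟩
      else ⟨(f i).val - (n - r), by
        have := hfb i (by omega)
        have := (f i).isLt
        omega⟩, ?_, ?_, ?_⟩
    · intro i h1; beta_reduce; rw [dif_pos h1]
    · intro i h1 h2; beta_reduce; rw [dif_neg (by omega), dif_pos h2]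
    · intro i h3; beta_reduce; rw [dif_neg (by omega), dif_neg (by omega)]
  have hGmono : StrictMono G := by
    intro i j hij
    rw [Fin.lt_def] at hij ⊢
    rcases Nat.lt_or_ge i.val a with hi1 | hi1
    · rw [hG1 i hi1]
      have h1 := hfa i hi1
      rcases Nat.lt_or_ge j.val a with hj1 | hj1
      · rw [hG1 j hj1]
        exact Fin.lt_def.mp (hf (Fin.lt_def.mpr hij))
      · rcases Nat.lt_or_ge j.val (a + m) with hj2 | hj2
        · rw [hG2 j hj1 hj2]; omega
        · rw [hG3 j hj2]
          have := hfb j hj2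
          omega
    · rcases Nat.lt_or_ge i.val (a + m) with hi2 | hi2
      · rw [hG2 i hi1 hi2]
        have h5 := (e ⟨i.val - a, by omega⟩).isLt
        rcases Nat.lt_or_ge j.val a with hj1 | hj1
        · omega
        · rcases Nat.lt_or_ge j.val (a + m) with hj2 | hj2
          · rw [hG2 j hj1 hj2]
            have := hemono (show (⟨i.val - a, by omega⟩ : Fin m) < ⟨j.val - a, by omega⟩ by
              rw [Fin.lt_def]; simp only [Fin.val_mk]; omega)
            rw [Fin.lt_def] at this
            omega
          · rw [hG3 j hj2]
            have := hfb j hj2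
            omega
      · rw [hG3 i hi2]
        have h1 := hfb i hi2
        rcases Nat.lt_or_ge j.val a with hj1 | hj1
        · omega
        · rcases Nat.lt_or_ge j.val (a + m) with hj2 | hj2
          · omega
          · rw [hG3 j hj2]
            have h2 := hfb j hj2
            have h3 := Fin.lt_def.mp (hf (Fin.lt_def.mpr hij))
            omega
  -- value computation for ρ ∘ G
  have hcomp : ∀ i : Fin k,
      (i.val < a ∨ a + m ≤ i.val →
        (ρ (G i)).val = squish b (n-r) (π (f i)).val ∧
        ((π (f i)).val < b ∨ b + n ≤ (π (f i)).val)) ∧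
      (∀ (_ : a ≤ i.val) (h2 : i.val < a + m),
        (ρ (G i)).val = b + (ψ (e ⟨i.val - a, by omega⟩)).val) := by
    intro i
    constructor
    · intro hcase
      rcases hcase with h1 | h1
      · have hGi := hG1 i h1
        have hfi := hfa i h1
        have hval := hR1 (G i) (by omega)
        have hidx : (⟨(G i).val, by omega⟩ : Fin N) = f i := Fin.ext (by simp only [Fin.val_mk]; omega)
        rw [hρval, hval, hidx]
        exact ⟨rfl, hout _ (by omega)⟩
      · have hGi := hG3 i h1
        have hfi := hfb i h1
        have hGge : s + r ≤ (G i).val := by omega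
        have hval := hR3 (G i) hGge
        have hidx : (⟨(G i).val + (n - r), by have := (f i).isLt; omega⟩ : Fin N) = f i :=
          Fin.ext (by simp only [Fin.val_mk]; omega)
        rw [hρval, hval, hidx]
        exact ⟨rfl, hout _ (by omega)⟩
    · intro h1 h2
      have hGi := hG2 i h1 h2
      have h5 := (e ⟨i.val - a, by omega⟩).isLt
      have hval := hR2 (G i) (by omega) (by omega)
      have hidx : (⟨(G i).val - s, by omega⟩ : Fin r) = e ⟨i.val - a, by omega⟩ :=
        Fin.ext (by simp only [Fin.val_mk]; omega)
      rw [hρval, hval, hidx]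
  -- inside values of τ
  have hτin : ∀ (i : Fin k) (_ : a ≤ i.val) (h2 : i.val < a + m),
      (τ i).val = c + (σ ⟨i.val - a, by omega⟩).val := by
    intro i h1 h2
    have := hiso ⟨i.val - a, by omega⟩ (by simp only [Fin.val_mk]; omega)
    have hidx : (⟨a + (⟨i.val - a, by omega⟩ : Fin m).val, by simp only [Fin.val_mk]; omega⟩ : Fin k) = i :=
      Fin.ext (by simp only [Fin.val_mk]; omega)
    rw [hidx] at this
    exact this
  apply embF_contains G hGmono
  intro i j
  rw [Fin.lt_def, Fin.lt_def]
  have hofv := hof i j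
  rw [Fin.lt_def, Fin.lt_def] at hofv
  have hmidval : ∀ (x : Fin k), a ≤ x.val → x.val < a + m →
      b ≤ (π (f x)).val ∧ (π (f x)).val < b + n := by
    intro x h1 h2
    have := (hchar x).mpr ⟨h1, h2⟩
    exact block_val π φ s b hsn hblock (f x) this.1 this.2
  by_cases hi : a ≤ i.val ∧ i.val < a + m
  · by_cases hj : a ≤ j.val ∧ j.val < a + m
    · -- mid-mid
      have hρi := (hcomp i).2 hi.1 hi.2
      have hρj := (hcomp j).2 hj.1 hj.2
      have hτi := hτin i hi.1 hi.2
      have hτj := hτin j hj.1 hj.2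
      have hord := heord ⟨i.val - a, by omega⟩ ⟨j.val - a, by omega⟩
      rw [Fin.lt_def, Fin.lt_def] at hord
      rw [hρi, hρj, hτi, hτj]
      omega
    · -- mid-out
      have hout2 : i.val < a ∨ a + m ≤ i.val → False := by omega
      have hjcase : j.val < a ∨ a + m ≤ j.val := by omega
      obtain ⟨hρj, houtj⟩ := (hcomp j).1 hjcase
      have hρi := (hcomp i).2 hi.1 hi.2
      have hbi := hmidval i hi.1 hi.2
      have hsq := block_lt_squish (v := (π (f j)).val)
        (t := (ψ (e ⟨i.val - a, by omega⟩)).val) hrn (ψ _).isLt houtj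
      rw [hρi, hρj]
      omega
  · have hicase : i.val < a ∨ a + m ≤ i.val := by omega
    obtain ⟨hρi, houti⟩ := (hcomp i).1 hicase
    by_cases hj : a ≤ j.val ∧ j.val < a + m
    · -- out-mid
      have hρj := (hcomp j).2 hj.1 hj.2
      have hbj := hmidval j hj.1 hj.2
      have hsq := squish_lt_block (v := (π (f i)).val)
        (t := (ψ (e ⟨j.val - a, by omega⟩)).val) hrn (ψ _).isLt houti
      rw [hρi, hρj]
      omega
    · -- out-out
      have hjcase : j.val < a ∨ a + m ≤ j.val := by omega
      obtain ⟨hρj, houtj⟩ := (hcomp j).1 hjcase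
      rw [hρi, hρj, squish_mono_iff hrn houti houtj]
      exact hofv

end Glue
end AuxNICE


section Main

lemma contains_nil {n : ℕ} (σ : Equiv.Perm (Fin 0)) (π : Equiv.Perm (Fin n)) : Contains σ π :=
  embF_contains (fun x => x.elim0) (fun x => x.elim0) (fun i => i.elim0)

lemma contains_fin1 (σ π : Equiv.Perm (Fin 1)) : Contains σ π :=
  embF_contains id strictMono_id
    (fun i j => iff_of_false (fin1_not_lt _ _) (fin1_not_lt _ _))

lemma mu_pone_one (π : Equiv.Perm (Fin 1)) : mu pone 1 π = 1 := by
  rw [mu, if_pos (contains_pone le_rfl π), if_pos (contains_fin1 π pone)]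

lemma cover_reach {n : ℕ} (φp : Equiv.Perm (Fin n)) {m : ℕ} (σ : Equiv.Perm (Fin m))
    (h1 : Contains σ φp) (h2 : ¬ Contains φp σ) :
    ∃ χ : SigmaPerm, χ ∈ permCover ⟨n, φp⟩ ∧ Contains σ χ.2 := by
  classical
  set P : ℕ → Prop :=
    fun l => ∃ τ' : Equiv.Perm (Fin l), Contains σ τ' ∧ Contains τ' φp ∧ ¬ Contains φp τ'
    with hPdef
  have hPm : P m := ⟨σ, contains_refl σ, h1, h2⟩
  have hmn : m ≤ n := contains_length_le h1
  have hPl₀ : P (Nat.findGreatest P n) := Nat.findGreatest_spec hmn hPm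
  obtain ⟨τ₀, hστ₀, hτ₀φ, hφτ₀⟩ := hPl₀
  refine ⟨⟨Nat.findGreatest P n, τ₀⟩, ⟨⟨hτ₀φ, hφτ₀⟩, ?_⟩, hστ₀⟩
  rintro ⟨⟨t1, t2⟩, ⟨hlt1a, hlt1b⟩, ⟨hlt2a, hlt2b⟩⟩
  have hl₀t : Nat.findGreatest P n < t1 := by
    have hle : Nat.findGreatest P n ≤ t1 := contains_length_le hlt1a
    rcases Nat.lt_or_ge (Nat.findGreatest P n) t1 with h | h
    · exact h
    · exfalso
      have heq : Nat.findGreatest P n = t1 := by omega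
      clear h hle
      subst heq
      refine hlt1b ?_
      rw [eq_of_contains_same hlt1a]
      exact contains_refl _
  have ht1n : t1 ≤ n := contains_length_le hlt2a
  exact Nat.findGreatest_is_greatest hl₀t ht1n ⟨t2, contains_trans hστ₀ hlt1a, hlt2a, hlt2b⟩

theorem nice_implies_strongly_zero' (φ : SigmaPerm) (hφ : Nice φ) :
    (∀ (N : ℕ) (π : Equiv.Perm (Fin N)), HasIntervalIso π φ.2 → mu pone N π = 0) ∧
    φ ∈ SZ := by
  obtain ⟨n, φp⟩ := φ
  obtain ⟨hmu, ψ, hψcover, hψground⟩ := hφ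
  obtain ⟨r, ψp⟩ := ψ
  simp only at hmu
  -- n ≥ 2
  have hn2 : 2 ≤ n := by
    by_contra hcon
    push_neg at hcon
    interval_cases n
    · obtain ⟨⟨hc1, hc2⟩, -⟩ := hψcover
      have hlen : r ≤ 0 := contains_length_le hc1
      have hr0 : r = 0 := by omega
      subst hr0
      exact hc2 (contains_nil φp ψp)
    · rw [mu_pone_one φp] at hmu
      exact absurd hmu one_ne_zero
  -- ψ basic facts
  obtain ⟨⟨hψφ0, hφψ0⟩, hψnoint⟩ := hψcover
  have hψφ : Contains ψp φp := hψφ0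
  have hφψ : ¬ Contains φp ψp := fun h => hφψ0 h
  clear hψφ0 hφψ0
  have hrn : r < n := by
    have hle : r ≤ n := contains_length_le hψφ
    rcases Nat.lt_or_ge r n with h | h
    · exact h
    · exfalso
      have heq : r = n := by omega
      subst heq
      refine hφψ ?_
      rw [eq_of_contains_same hψφ]
      exact contains_refl _
  have hr1 : 1 ≤ r := by
    by_contra hcon
    push_neg at hcon
    have hr0 : r = 0 := by omega
    subst hr0
    have ha1 : ¬ Contains pone ψp := not_contains_of_lt (show (0:ℕ) < 1 by omega)
    have ha2 : Contains pone φp := contains_pone (by omega) φp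
    have ha3 : ¬ Contains φp pone := not_contains_of_lt (show (1:ℕ) < n by omega)
    refine hψnoint ⟨⟨1, pone⟩, ⟨contains_nil ψp pone, ha1⟩, ⟨ha2, ha3⟩⟩
  obtain ⟨hgo, hgord⟩ := hψφ
  have key : ∀ N : ℕ, ∀ π : Equiv.Perm (Fin N), HasIntervalIso π φp → mu pone N π = 0 := by
    intro N
    induction N using Nat.strong_induction_on with
    | _ N IH =>
      intro π hiso
      obtain ⟨s, b, hsn, hblock⟩ := hiso
      have hbn : b + n ≤ N := by
        obtain ⟨j0, hj0⟩ : ∃ j0 : Fin n, (φp j0).val = n - 1 :=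
          ⟨φp.symm ⟨n - 1, by omega⟩, by rw [Equiv.apply_symm_apply]⟩
        have hj0lt : s + j0.val < N := by have := j0.isLt; omega
        have hval := hblock j0 hj0lt
        have hlt := (π ⟨s + j0.val, hj0lt⟩).isLt
        omega
      by_cases hNn : N = n
      · subst hNn
        have hb0 : b = 0 := by omega
        have hs0 : s = 0 := by omega
        have hπφ : π = φp := by
          apply Equiv.ext
          intro i
          apply Fin.ext
          have hidx : ∀ (hh : s + i.val < N), (⟨s + i.val, hh⟩ : Fin N) = i :=
            fun hh => Fin.ext (by simp only [Fin.val_mk]; omega)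
          have hv := hblock i (by omega)
          rw [hidx] at hv
          omega
        rw [hπφ]
        exact hmu
      · have hNgt : n < N := by omega
        obtain ⟨ρ, hρπ, hglue⟩ :=
          glue π φp s b hsn hbn hblock ψp hr1 (le_of_lt hrn) (⇑hgo) hgo.strictMono hgord
        have hM2 : 2 ≤ N - (n - r) := by omega
        have hMN : N - (n - r) < N := by omega
        have hterm : ∀ p ∈ Finset.range N,
            (∑ τ : Equiv.Perm (Fin p), if Contains pone τ ∧ Contains τ π then mu pone p τ else 0)
          = (∑ τ : Equiv.Perm (Fin p),
              if Contains pone τ ∧ Contains τ ρ then mu pone p τ else 0) := by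
          intro p hp
          rw [Finset.mem_range] at hp
          apply Finset.sum_congr rfl
          intro τ _
          by_cases hμ : mu pone p τ = 0
          · rw [hμ]
            simp
          · have hcond : (Contains pone τ ∧ Contains τ π) ↔ (Contains pone τ ∧ Contains τ ρ) := by
              constructor
              · rintro ⟨hp1, hτπ⟩
                refine ⟨hp1, ?_⟩
                obtain ⟨fo, hof⟩ := hτπ
                obtain ⟨m, a, c, σ, g, ham, hmn', hAchar, hchar, hιso, hgmono2, hgord2, hgpos⟩ :=
                  extract π φp s b hsn hbn hblock τ (⇑fo) fo.strictMono hof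
                by_cases hσψ : Contains σ ψp
                · obtain ⟨eo, heord⟩ := hσψ
                  exact hglue p τ (⇑fo) fo.strictMono hof m a c σ (⇑eo) ham hAchar hchar hιso
                    eo.strictMono heord
                · exfalso
                  have hτσiso : HasIntervalIso τ σ := ⟨a, c, by omega, hιso⟩
                  have hσφ : Contains σ φp := embF_contains g hgmono2 hgord2
                  by_cases hφσ : Contains φp σ
                  · have hmeq : m = n := by
                      have := contains_length_le hφσ
                      omega
                    subst hmeq
                    have hσeq : σ = φp := eq_of_contains_same hσφ
                    subst hσeq
                    exact hμ (IH p hp τ hτσiso)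
                  · by_cases hSZ : (⟨m, σ⟩ : SigmaPerm) ∈ SZ
                    · exact hμ (hSZ p τ hτσiso)
                    · obtain ⟨χ, hχcover, hχcont⟩ := cover_reach φp σ hσφ hφσ
                      by_cases hχψ : χ = (⟨r, ψp⟩ : SigmaPerm)
                      · subst hχψ
                        exact hσψ hχcont
                      · have hmem : (⟨m, σ⟩ : SigmaPerm) ∈
                            permGround (permCover ⟨n, φp⟩ \ {⟨r, ψp⟩}) := by
                          refine ⟨Set.mem_biUnion ⟨hχcover, hχψ⟩ hχcont, hSZ⟩
                        exact hσψ (hψground hmem)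
              · rintro ⟨hp1, hτρ⟩
                exact ⟨hp1, contains_trans hτρ hρπ⟩
            rw [if_congr hcond rfl rfl]
        rw [mu_rec π (by omega), Finset.sum_congr rfl hterm, neg_eq_zero,
          Finset.range_eq_Ico,
          ← Finset.sum_Ico_consecutive _ (Nat.zero_le (N - (n - r))) (le_of_lt hMN)]
        have h2 : (∑ p ∈ Finset.Ico (N - (n - r)) N, ∑ τ : Equiv.Perm (Fin p),
            if Contains pone τ ∧ Contains τ ρ then mu pone p τ else 0)
            = mu pone (N - (n - r)) ρ := by
          rw [Finset.sum_eq_single_of_mem (N - (n - r))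
            (Finset.mem_Ico.mpr ⟨le_refl _, hMN⟩)]
          · rw [Finset.sum_eq_single_of_mem ρ (Finset.mem_univ ρ)]
            · rw [if_pos ⟨contains_pone (by omega) ρ, contains_refl ρ⟩]
            · intro τ _ hτρ
              rw [if_neg]
              rintro ⟨-, hc⟩
              exact hτρ (eq_of_contains_same hc)
          · intro p hp hpM
            apply Finset.sum_eq_zero
            intro τ _
            rw [if_neg]
            rintro ⟨-, hc⟩
            have := contains_length_le hc
            rw [Finset.mem_Ico] at hp
            omega
        have h1 : (∑ p ∈ Finset.Ico 0 (N - (n - r)), ∑ τ : Equiv.Perm (Fin p),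
            if Contains pone τ ∧ Contains τ ρ then mu pone p τ else 0)
            = - mu pone (N - (n - r)) ρ := by
          rw [← Finset.range_eq_Ico]
          have := mu_rec ρ hM2
          linarith
        rw [h1, h2]
        ring
  exact ⟨key, key⟩

end Main

theorem nice_implies_strongly_zero (φ : SigmaPerm) (hφ : Nice φ) :
    (∀ (N : ℕ) (π : Equiv.Perm (Fin N)), HasIntervalIso π φ.2 → mu pone N π = 0) ∧
    φ ∈ SZ := nice_implies_strongly_zero' φ hφ
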